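/- Let n ≥ 2, 1 ≤ q < n/(n−1), and let μ be a vanishing logarithmic q-Carleson measure on the unit ball B of ℂⁿ. For r ∈ (0,1) define the cut-off measure dμ_r(z) = χ_{{|z| > r}}(z) dμ(z). Then ‖μ_r‖_{LCM_q} → 0 as r → 1⁻; more precisely, for every ε > 0 there exists r₀ ∈ (0,1) such that for all r > r₀, all ξ ∈ S, and all 0 < δ ≤ 2: μ_r(Q_δ(ξ)) ≤ C ε δ^{nq} (log(2/δ))^{−2} for a constant C independent of ε, r, ξ, δ. -/

import Mathlib

open MeasureTheory Metric Filter Set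
open scoped ENNReal Topology NNReal

noncomputable section

abbrev Cn (n : ℕ) := EuclideanSpace ℂ (Fin n)

instance (n : ℕ) : MeasurableSpace (Cn n) := borel _
instance (n : ℕ) : BorelSpace (Cn n) := ⟨rfl⟩

def herm {n : ℕ} (z w : Cn n) : ℂ := ∑ j, z j * (starRingEnd ℂ) (w j)

def ballB (n : ℕ) : Set (Cn n) := Metric.ball 0 1

def vMeas (n : ℕ) : Measure (Cn n) :=
  ((volume (ballB n))⁻¹ • (volume : Measure (Cn n))).restrict (ballB n)

def radialDeriv {n : ℕ} (f : Cn n → ℂ) (z : Cn n) : ℂ := fderiv ℂ f z z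

def moebFactor {n : ℕ} (a z : Cn n) : ℝ :=
  ((1 - ‖a‖ ^ 2) * (1 - ‖z‖ ^ 2)) / (‖1 - herm z a‖) ^ 2

def pseudoDist {n : ℕ} (z₁ z₂ : Cn n) : ℝ := Real.sqrt (1 - moebFactor z₁ z₂)

def qpIntegral {n : ℕ} (p : ℝ) (f : Cn n → ℂ) (a : Cn n) : ℝ≥0∞ :=
  ∫⁻ z in ballB n,
    ENNReal.ofReal ((‖radialDeriv f z‖) ^ 2 * (1 - ‖z‖ ^ 2) ^ 2 *
      moebFactor a z ^ ((n : ℝ) * p) * (1 - ‖z‖ ^ 2) ^ (-(n : ℝ) - 1)) ∂(vMeas n)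

def qpNorm {n : ℕ} (p : ℝ) (f : Cn n → ℂ) : ℝ≥0∞ :=
  ENNReal.ofReal (‖f 0‖) + (⨆ a ∈ ballB n, qpIntegral p f a) ^ (1/2 : ℝ)

def memQp {n : ℕ} (p : ℝ) (f : Cn n → ℂ) : Prop :=
  DifferentiableOn ℂ f (ballB n) ∧ qpNorm p f < ⊤

def Qbox {n : ℕ} (ξ : Cn n) (δ : ℝ) : Set (Cn n) :=
  {z ∈ ballB n | ‖1 - herm z ξ‖ < δ}

def logCMsq {n : ℕ} (q : ℝ) (μ : Measure (Cn n)) : ℝ≥0∞ :=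
  ⨆ (ξ : Cn n) (_ : ‖ξ‖ = 1) (δ : ℝ) (_ : 0 < δ),
    μ (Qbox ξ δ) * ENNReal.ofReal (δ ^ (-((n : ℝ) * q)) * Real.log (2 / δ) ^ 2)

def IsLogCarleson {n : ℕ} (q : ℝ) (μ : Measure (Cn n)) : Prop := logCMsq q μ < ⊤

def cmSq {n : ℕ} (p : ℝ) (μ : Measure (Cn n)) : ℝ≥0∞ :=
  ⨆ (ξ : Cn n) (_ : ‖ξ‖ = 1) (δ : ℝ) (_ : 0 < δ),
    μ (Qbox ξ δ) * ENNReal.ofReal (δ ^ (-((n : ℝ) * p)))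

def IsVanishingLogCarleson {n : ℕ} (q : ℝ) (μ : Measure (Cn n)) : Prop :=
  ∀ ε : ℝ, 0 < ε → ∃ δ₀ > (0:ℝ), ∀ ξ : Cn n, ‖ξ‖ = 1 → ∀ δ : ℝ, 0 < δ → δ < δ₀ →
    μ (Qbox ξ δ) * ENNReal.ofReal (δ ^ (-((n : ℝ) * q)) * Real.log (2 / δ) ^ 2)
      < ENNReal.ofReal ε

def tentNormSq {n : ℕ} (q : ℝ) (μ : Measure (Cn n)) (f : Cn n → ℂ) : ℝ≥0∞ :=
  ⨆ (ξ : Cn n) (_ : ‖ξ‖ = 1) (δ : ℝ) (_ : 0 < δ),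
    ENNReal.ofReal (δ ^ (-((n : ℝ) * q))) *
      ∫⁻ z in Qbox ξ δ, ENNReal.ofReal ((‖f z‖) ^ 2) ∂μ

def Tg {n : ℕ} (g f : Cn n → ℂ) (z : Cn n) : ℂ :=
  ∫ t in (0:ℝ)..1, f (t • z) * radialDeriv g (t • z) / (t : ℂ)

def Lg {n : ℕ} (g f : Cn n → ℂ) (z : Cn n) : ℂ :=
  ∫ t in (0:ℝ)..1, g (t • z) * radialDeriv f (t • z) / (t : ℂ)

def Mg {n : ℕ} (g f : Cn n → ℂ) (z : Cn n) : ℂ := g z * f z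

def muQG {n : ℕ} (q : ℝ) (g : Cn n → ℂ) : Measure (Cn n) :=
  (vMeas n).withDensity fun z =>
    ENNReal.ofReal ((‖radialDeriv g z‖) ^ 2 *
      (1 - ‖z‖ ^ 2) ^ ((n : ℝ) * (q - 1) + 1))

def BoundedQQ {n : ℕ} (p q : ℝ) (T : (Cn n → ℂ) → (Cn n → ℂ)) : Prop :=
  ∃ C : ℝ, 0 < C ∧ ∀ f : Cn n → ℂ, memQp p f →
    memQp q (T f) ∧ qpNorm q (T f) ≤ ENNReal.ofReal C * qpNorm p f

def CompactQQ {n : ℕ} (p q : ℝ) (T : (Cn n → ℂ) → (Cn n → ℂ)) : Prop :=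
  (∀ f : Cn n → ℂ, memQp p f → memQp q (T f)) ∧
  ∀ f : ℕ → (Cn n → ℂ), (∀ j, memQp p (f j)) → (∀ j, qpNorm p (f j) ≤ 1) →
    ∃ (h : Cn n → ℂ) (φ : ℕ → ℕ), StrictMono φ ∧ memQp q h ∧
      Tendsto (fun k => qpNorm q (fun z => T (f (φ k)) z - h z)) atTop (𝓝 0)

def blochNorm {n : ℕ} (f : Cn n → ℂ) : ℝ≥0∞ :=
  ENNReal.ofReal (‖f 0‖) +
    ⨆ z ∈ ballB n, ENNReal.ofReal (‖fderiv ℂ f z‖ * (1 - ‖z‖ ^ 2))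

def memBloch {n : ℕ} (f : Cn n → ℂ) : Prop :=
  DifferentiableOn ℂ f (ballB n) ∧ blochNorm f < ⊤

def BoundedBMOABloch {n : ℕ} (T : (Cn n → ℂ) → (Cn n → ℂ)) : Prop :=
  ∃ C : ℝ, 0 < C ∧ ∀ f : Cn n → ℂ, memQp 1 f →
    memBloch (T f) ∧ blochNorm (T f) ≤ ENNReal.ofReal C * qpNorm 1 f

def BoundedOnB {n : ℕ} (g : Cn n → ℂ) : Prop :=
  ∃ M : ℝ, ∀ z ∈ ballB n, ‖g z‖ ≤ M

def Qsphere {n : ℕ} (ξ : Cn n) (δ : ℝ) : Set (Cn n) :=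
  {η | ‖η‖ = 1 ∧ ‖1 - herm η ξ‖ < δ}

/-
Take `C = 1` and, for a given `ε`, let `δ₁ ≤ 1` be a threshold below which the vanishing
condition holds with `ε`. Split according to the size of `δ`. For `δ < δ₁` the vanishing condition
bounds `μ(Q_δ(ξ))` itself. For `δ ≥ δ₁` the set lies in the shell `{1 - t < |z| < 1}`; this shell
is covered by finitely many small boxes (compactness of the sphere), so it has finite measure,
and its measure tends to `0` as `t → 0⁺` by continuity from above. Choosing `r₀ = 1 - t` with
`μ(shell) < ε δ₁^{nq} / log² (2/δ₁)`, the bounds `log (2/δ) ≤ log (2/δ₁)` and `δ₁^{nq} ≤ δ^{nq}`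
finish the estimate.
-/

lemma ne_top_of_mul_rpow_neg_log_sq_lt {a : ℝ≥0∞} {δ s ε : ℝ} (hδ : 0 < δ) (hδ2 : δ < 2)
    (h : a * ENNReal.ofReal (δ ^ (-s) * Real.log (2 / δ) ^ 2) < ENNReal.ofReal ε) : a ≠ ⊤ := by
  have hlog : 0 < Real.log (2 / δ) := Real.log_pos ((one_lt_div hδ).mpr hδ2)
  exact (ENNReal.lt_top_of_mul_ne_top_left h.ne_top (ENNReal.ofReal_pos.mpr (by positivity)).ne').ne

lemma mul_ofReal_le_of_mul_rpow_neg_lt {a : ℝ≥0∞} {δ s L ε : ℝ} (hδ : 0 < δ)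
    (h : a * ENNReal.ofReal (δ ^ (-s) * L) < ENNReal.ofReal ε) :
    a * ENNReal.ofReal L ≤ ENNReal.ofReal (ε * δ ^ s) := by
  have hL : L = δ ^ (-s) * L * δ ^ s := by
    rw [mul_right_comm, ← Real.rpow_add hδ, neg_add_cancel, Real.rpow_zero, one_mul]
  calc a * ENNReal.ofReal L
      = a * ENNReal.ofReal (δ ^ (-s) * L) * ENNReal.ofReal (δ ^ s) := by
        rw [mul_assoc, ← ENNReal.ofReal_mul' (by positivity), ← hL]
    _ ≤ ENNReal.ofReal ε * ENNReal.ofReal (δ ^ s) := by gcongr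
    _ = ENNReal.ofReal (ε * δ ^ s) := (ENNReal.ofReal_mul' (by positivity)).symm

lemma mul_ofReal_log_sq_le {a : ℝ≥0∞} {ε s δ₁ δ : ℝ} (hε : 0 ≤ ε) (hs : 0 ≤ s) (hδ₁ : 0 < δ₁)
    (hδ₁2 : δ₁ < 2) (hδ₁δ : δ₁ ≤ δ) (hδ2 : δ ≤ 2)
    (ha : a ≤ ENNReal.ofReal (ε * δ₁ ^ s / Real.log (2 / δ₁) ^ 2)) :
    a * ENNReal.ofReal (Real.log (2 / δ) ^ 2) ≤ ENNReal.ofReal (ε * δ ^ s) := by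
  have hδ : 0 < δ := hδ₁.trans_le hδ₁δ
  have hlog₁ : 0 < Real.log (2 / δ₁) := Real.log_pos ((one_lt_div hδ₁).mpr hδ₁2)
  have hlog : 0 ≤ Real.log (2 / δ) := Real.log_nonneg ((one_le_div hδ).mpr hδ2)
  have hlog_le : Real.log (2 / δ) ≤ Real.log (2 / δ₁) :=
    Real.log_le_log (by positivity) (div_le_div_of_nonneg_left zero_le_two hδ₁ hδ₁δ)
  calc a * ENNReal.ofReal (Real.log (2 / δ) ^ 2)
      ≤ ENNReal.ofReal (ε * δ₁ ^ s / Real.log (2 / δ₁) ^ 2) *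
          ENNReal.ofReal (Real.log (2 / δ₁) ^ 2) := by gcongr
    _ = ENNReal.ofReal (ε * δ₁ ^ s) := by
        rw [← ENNReal.ofReal_mul' (by positivity), div_mul_cancel₀ _ (by positivity)]
    _ ≤ ENNReal.ofReal (ε * δ ^ s) := by gcongr

namespace Cn

variable {n : ℕ}

lemma herm_eq_inner (z w : Cn n) : herm z w = inner ℂ w z := by
  simp [herm, PiLp.inner_apply, RCLike.inner_apply]

lemma norm_herm_le (z w : Cn n) : ‖herm z w‖ ≤ ‖z‖ * ‖w‖ := by
  rw [herm_eq_inner, mul_comm]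
  exact norm_inner_le_norm w z

lemma herm_sub_right (z w w' : Cn n) : herm z (w - w') = herm z w - herm z w' := by
  simp only [herm_eq_inner, inner_sub_left]

lemma herm_self (z : Cn n) : herm z z = (‖z‖ : ℂ) ^ 2 :=
  (herm_eq_inner z z).trans (inner_self_eq_norm_sq_to_K z)

lemma herm_inv_norm_smul_self {z : Cn n} (hz : z ≠ 0) : herm z (‖z‖⁻¹ • z) = ‖z‖ := by
  have hz' : (‖z‖ : ℂ) ≠ 0 := by exact_mod_cast norm_ne_zero_iff.mpr hz
  rw [herm_eq_inner, ← Complex.coe_smul, inner_smul_left, ← herm_eq_inner, herm_self]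
  simp only [Complex.ofReal_inv, map_inv₀, Complex.conj_ofReal]
  field_simp

lemma norm_one_sub_herm_le {z : Cn n} (hz0 : z ≠ 0) (hz1 : ‖z‖ ≤ 1) (ξ : Cn n) :
    ‖1 - herm z ξ‖ ≤ (1 - ‖z‖) + ‖‖z‖⁻¹ • z - ξ‖ := by
  have hsplit : 1 - herm z ξ = ((1 - ‖z‖ : ℝ) : ℂ) + herm z (‖z‖⁻¹ • z - ξ) := by
    rw [herm_sub_right, herm_inv_norm_smul_self hz0]; push_cast; ring
  calc ‖1 - herm z ξ‖ ≤ ‖((1 - ‖z‖ : ℝ) : ℂ)‖ + ‖herm z (‖z‖⁻¹ • z - ξ)‖ :=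
        hsplit ▸ norm_add_le _ _
    _ ≤ (1 - ‖z‖) + 1 * ‖‖z‖⁻¹ • z - ξ‖ := by
        rw [Complex.norm_real, Real.norm_of_nonneg (by linarith)]
        gcongr
        exact (norm_herm_le _ _).trans (by gcongr)
    _ = _ := by rw [one_mul]

def outerShell (n : ℕ) (t : ℝ) : Set (Cn n) := {z ∈ ballB n | 1 - t < ‖z‖}

lemma measurableSet_outerShell (t : ℝ) : MeasurableSet (outerShell n t) :=
  isOpen_ball.measurableSet.inter (measurableSet_lt measurable_const measurable_norm)

lemma outerShell_mono {s t : ℝ} (hst : s ≤ t) : outerShell n s ⊆ outerShell n t :=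
  fun _ ⟨hz, hzs⟩ => ⟨hz, by linarith⟩

lemma biInter_outerShell : ⋂ t > (0 : ℝ), outerShell n t = ∅ := by
  refine eq_empty_of_forall_notMem fun z hz => ?_
  simp only [mem_iInter] at hz
  have hz1 : ‖z‖ < 1 := mem_ball_zero_iff.mp (hz 1 one_pos).1
  linarith [(hz (1 - ‖z‖) (by linarith)).2]

lemma exists_finite_outerShell_subset_biUnion_Qbox {t : ℝ} (ht0 : 0 < t) (ht1 : t ≤ 1) :
    ∃ S ⊆ sphere (0 : Cn n) 1, S.Finite ∧ outerShell n t ⊆ ⋃ ξ ∈ S, Qbox ξ (2 * t) := by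
  obtain ⟨S, hS, hSfin, hcover⟩ := finite_cover_balls_of_compact (isCompact_sphere (0 : Cn n) 1) ht0
  refine ⟨S, hS, hSfin, fun z ⟨hzB, hzt⟩ => ?_⟩
  have hz1 : ‖z‖ < 1 := mem_ball_zero_iff.mp hzB
  have hz0 : z ≠ 0 := norm_pos_iff.mp (by linarith)
  have hproj : ‖z‖⁻¹ • z ∈ sphere (0 : Cn n) 1 := by
    simp [norm_smul, inv_mul_cancel₀ (norm_ne_zero_iff.mpr hz0)]
  obtain ⟨ξ, hξS, hξ⟩ := mem_iUnion₂.mp (hcover hproj)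
  refine mem_biUnion hξS ⟨hzB, ?_⟩
  calc ‖1 - herm z ξ‖ ≤ (1 - ‖z‖) + ‖‖z‖⁻¹ • z - ξ‖ := norm_one_sub_herm_le hz0 hz1.le ξ
    _ < t + t := add_lt_add (by linarith) (mem_ball_iff_norm.mp hξ)
    _ = 2 * t := by ring

lemma measure_outerShell_ne_top (μ : Measure (Cn n)) {t : ℝ} (ht0 : 0 < t) (ht1 : t ≤ 1)
    (hQ : ∀ ξ : Cn n, ‖ξ‖ = 1 → μ (Qbox ξ (2 * t)) ≠ ⊤) : μ (outerShell n t) ≠ ⊤ := by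
  obtain ⟨S, hS, hSfin, hcover⟩ := exists_finite_outerShell_subset_biUnion_Qbox ht0 ht1
  refine ne_top_of_le_ne_top (measure_biUnion_lt_top hSfin fun ξ hξ => ?_).ne (measure_mono hcover)
  exact (hQ ξ (mem_sphere_zero_iff_norm.mp (hS hξ))).lt_top

lemma tendsto_measure_outerShell (μ : Measure (Cn n)) {t₁ : ℝ} (ht₁ : 0 < t₁)
    (hfin : μ (outerShell n t₁) ≠ ⊤) :
    Tendsto (fun t => μ (outerShell n t)) (𝓝[>] 0) (𝓝 0) := by
  have h := tendsto_measure_biInter_gt (μ := μ)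
    (fun t _ => (measurableSet_outerShell t).nullMeasurableSet)
    (fun _ _ _ hst => outerShell_mono hst) ⟨t₁, ht₁, hfin⟩
  rwa [biInter_outerShell, measure_empty] at h

end Cn

theorem stmt18_general {n : ℕ} (q : ℝ)
    (hq1 : 1 ≤ q)
    (μ : Measure (Cn n))
    (hμ : IsVanishingLogCarleson q μ) :
    ∃ C : ℝ, 0 < C ∧ ∀ ε : ℝ, 0 < ε → ∃ r₀ : ℝ, 0 < r₀ ∧ r₀ < 1 ∧
      ∀ r : ℝ, r₀ < r → r < 1 → ∀ ξ : Cn n, ‖ξ‖ = 1 → ∀ δ : ℝ, 0 < δ → δ ≤ 2 →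
        (μ.restrict {z : Cn n | r < ‖z‖}) (Qbox ξ δ) *
            ENNReal.ofReal (Real.log (2 / δ) ^ 2)
          ≤ ENNReal.ofReal (C * ε * δ ^ ((n : ℝ) * q)) := by
  refine ⟨1, one_pos, fun ε hε => ?_⟩
  obtain ⟨δ₀, hδ₀, hvan⟩ := hμ ε hε
  set δ₁ := min δ₀ 1
  have hδ₁ : 0 < δ₁ := lt_min hδ₀ one_pos
  have hδ₁1 : δ₁ ≤ 1 := min_le_right _ _
  have hfin : μ (Cn.outerShell n (δ₁ / 4)) ≠ ⊤ :=
    Cn.measure_outerShell_ne_top μ (by positivity) (by linarith) fun ξ hξ =>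
      ne_top_of_mul_rpow_neg_log_sq_lt (by positivity) (by linarith)
        (hvan ξ hξ _ (by positivity) (by linarith [min_le_left δ₀ 1]))
  have hT : 0 < ε * δ₁ ^ ((n : ℝ) * q) / Real.log (2 / δ₁) ^ 2 := by
    have : 0 < Real.log (2 / δ₁) := Real.log_pos ((one_lt_div hδ₁).mpr (by linarith))
    positivity
  obtain ⟨t, hμt, ht0, ht1⟩ := (((Cn.tendsto_measure_outerShell μ (by positivity) hfin).eventually
    (gt_mem_nhds (ENNReal.ofReal_pos.mpr hT))).and (Ioo_mem_nhdsGT one_pos)).exists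
  refine ⟨1 - t, by linarith, by linarith, fun r hr _ ξ hξ δ hδ hδ2 => ?_⟩
  rw [one_mul, Measure.restrict_apply' (measurableSet_lt measurable_const measurable_norm)]
  rcases lt_or_ge δ δ₁ with hsmall | hlarge
  · exact (mul_le_mul_left (measure_mono inter_subset_left) _).trans
      (mul_ofReal_le_of_mul_rpow_neg_lt hδ (hvan ξ hξ δ hδ (hsmall.trans_le (min_le_left _ _))))
  · have hsub : Qbox ξ δ ∩ {z | r < ‖z‖} ⊆ Cn.outerShell n t :=
      fun z ⟨hzQ, hzr⟩ => ⟨hzQ.1, by linarith [show r < ‖z‖ from hzr]⟩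
    exact mul_ofReal_log_sq_le hε.le (by positivity) hδ₁ (by linarith) hlarge hδ2
      ((measure_mono hsub).trans hμt.le)

/-- The cut-off estimate (3.4): for a vanishing logarithmic `q`-Carleson measure,
the cut-off measures have logarithmic Carleson norm tending to `0`. -/
theorem stmt18 {n : ℕ} (hn : 2 ≤ n) (q : ℝ)
    (hq1 : 1 ≤ q) (hq2 : q < (n : ℝ) / ((n : ℝ) - 1))
    (μ : Measure (Cn n)) (hμB : μ (ballB n)ᶜ = 0)
    (hμ : IsVanishingLogCarleson q μ) :
    ∃ C : ℝ, 0 < C ∧ ∀ ε : ℝ, 0 < ε → ∃ r₀ : ℝ, 0 < r₀ ∧ r₀ < 1 ∧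
      ∀ r : ℝ, r₀ < r → r < 1 → ∀ ξ : Cn n, ‖ξ‖ = 1 → ∀ δ : ℝ, 0 < δ → δ ≤ 2 →
        (μ.restrict {z : Cn n | r < ‖z‖}) (Qbox ξ δ) *
            ENNReal.ofReal (Real.log (2 / δ) ^ 2)
          ≤ ENNReal.ofReal (C * ε * δ ^ ((n : ℝ) * q)) :=
  stmt18_general q hq1 μ hμ
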